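/- arXiv:2305.08218 — 4 statements merged into one kernel-verified Lean document; each statement's English description precedes it below -/
import Mathlib

section
/- For every real number τ > 0, there exists a finite simple graph G (with at least one vertex) such that the set S_τ = {v ∈ V(G) : SV(v) > τ} is not a dominating set of G. More precisely, there exists such a G containing a vertex a with deg(a) ≥ 1 such that SV(a) < τ and SV(b) < τ for every b ∈ N(a). -/
/-- The degree of a vertex in a finite simple graph. -/
noncomputable def deg {V : Type*} [Fintype V] (G : SimpleGraph V) (v : V) : ℕ := by
  classical exact G.degree v

/-- The Shapley value of a vertex: the sum of reciprocals of its neighbors' degrees. -/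
noncomputable def SV {V : Type*} [Fintype V] (G : SimpleGraph V) (v : V) : ℝ := by
  classical exact ∑ u ∈ G.neighborFinset v, (1 : ℝ) / (G.degree u)

/-- The relative neighbor-degree of a vertex: deg(v)^2 divided by the sum of neighbors' degrees. -/
noncomputable def RND {V : Type*} [Fintype V] (G : SimpleGraph V) (v : V) : ℝ := by
  classical exact (G.degree v : ℝ) ^ 2 / ∑ u ∈ G.neighborFinset v, (G.degree u : ℝ)

/-! Blow up the path on four vertices into layers of sizes 1, k, k², k³, consecutive layers
completely joined. The first three layers have degrees k, 1 + k², k + k³, so the apex has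
SV = k/(1 + k²) and each of its neighbours has SV = 1/k + k²/(k + k³); both are below 2/k,
hence below τ once k > 2/τ. Then no vertex of the apex's closed neighbourhood exceeds τ, so
the apex is not dominated. -/

open Finset

namespace SimpleGraph

variable {V W : Type*} [Fintype V] [Fintype W]

lemma deg_eq_degree (G : SimpleGraph V) (v : V) [Fintype (G.neighborSet v)] :
    deg G v = G.degree v := by
  unfold deg
  congr!

lemma SV_eq_sum_inv_deg (G : SimpleGraph V) [∀ v, Fintype (G.neighborSet v)] (v : V) :
    SV G v = ∑ u ∈ G.neighborFinset v, (1 : ℝ) / deg G u := by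
  unfold SV
  simp only [deg_eq_degree]
  congr!

lemma Iso.SV_eq {G : SimpleGraph V} {G' : SimpleGraph W} (f : G ≃g G') (v : V) :
    SV G' (f v) = SV G v := by
  classical
  rw [SV_eq_sum_inv_deg, SV_eq_sum_inv_deg]
  refine (sum_equiv f.toEquiv (fun u => ?_) fun u _ => ?_).symm
  · simp [f.map_adj_iff]
  · simp [deg_eq_degree]

lemma Iso.deg_eq {G : SimpleGraph V} {G' : SimpleGraph W} (f : G ≃g G') (v : V) :
    deg G' (f v) = deg G v := by
  classical
  simp [deg_eq_degree]

section Blowup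

variable {ι : Type*} (H : SimpleGraph ι) (s : ι → ℕ)

def blowup : SimpleGraph (Σ i, Fin (s i)) :=
  H.comap Sigma.fst

@[simp]
lemma blowup_adj {v w : Σ i, Fin (s i)} : (H.blowup s).Adj v w ↔ H.Adj v.1 w.1 :=
  Iff.rfl

variable [Fintype ι] [DecidableRel H.Adj]

lemma neighborFinset_blowup [∀ v, Fintype ((H.blowup s).neighborSet v)] (v : Σ i, Fin (s i)) :
    (H.blowup s).neighborFinset v = (H.neighborFinset v.1).sigma fun _ => univ := by
  ext w
  simp

lemma deg_blowup (i : ι) (x : Fin (s i)) :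
    deg (H.blowup s) ⟨i, x⟩ = ∑ j ∈ H.neighborFinset i, s j := by
  classical
  simp [deg_eq_degree, ← card_neighborFinset_eq_degree, neighborFinset_blowup, card_sigma]

lemma SV_blowup (i : ι) (x : Fin (s i)) :
    SV (H.blowup s) ⟨i, x⟩ =
      ∑ j ∈ H.neighborFinset i, (s j : ℝ) / ∑ l ∈ H.neighborFinset j, s l := by
  classical
  rw [SV_eq_sum_inv_deg, neighborFinset_blowup, sum_sigma]
  refine sum_congr rfl fun j _ => ?_
  simp [deg_blowup, div_eq_mul_inv]

end Blowup

end SimpleGraph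

open SimpleGraph

section PathGraphFour

variable [DecidableRel (pathGraph 4).Adj]

lemma pathGraph_four_neighborFinset_zero : (pathGraph 4).neighborFinset 0 = {1} := by
  ext j; fin_cases j <;> simp [pathGraph_adj]

lemma pathGraph_four_neighborFinset_one : (pathGraph 4).neighborFinset 1 = {0, 2} := by
  ext j; fin_cases j <;> simp [pathGraph_adj]

lemma pathGraph_four_neighborFinset_two : (pathGraph 4).neighborFinset 2 = {1, 3} := by
  ext j; fin_cases j <;> simp [pathGraph_adj]

end PathGraphFour

def layeredGraph (k : ℕ) : SimpleGraph (Σ i : Fin 4, Fin (k ^ (i : ℕ))) :=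
  (pathGraph 4).blowup fun i => k ^ (i : ℕ)

section LayeredGraph

variable {k : ℕ} {v w : Σ i : Fin 4, Fin (k ^ (i : ℕ))}

lemma layeredGraph_adj_of_fst_eq_zero (hv : v.1 = 0) : (layeredGraph k).Adj v w ↔ w.1 = 1 := by
  rw [layeredGraph, blowup_adj, pathGraph_adj, hv, Fin.ext_iff]
  simp only [Fin.val_zero, Fin.val_one]
  omega

lemma deg_layeredGraph_of_fst_eq_zero (hv : v.1 = 0) : deg (layeredGraph k) v = k := by
  classical
  obtain ⟨i, x⟩ := v
  subst hv
  rw [layeredGraph, deg_blowup, pathGraph_four_neighborFinset_zero]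
  simp

lemma SV_layeredGraph_of_fst_eq_zero (hv : v.1 = 0) :
    SV (layeredGraph k) v = k / (1 + k ^ 2) := by
  classical
  obtain ⟨i, x⟩ := v
  subst hv
  rw [layeredGraph, SV_blowup, pathGraph_four_neighborFinset_zero]
  simp [pathGraph_four_neighborFinset_one]

lemma SV_layeredGraph_of_fst_eq_one (hv : v.1 = 1) :
    SV (layeredGraph k) v = 1 / k + k ^ 2 / (k + k ^ 3) := by
  classical
  obtain ⟨i, x⟩ := v
  subst hv
  rw [layeredGraph, SV_blowup, pathGraph_four_neighborFinset_one]
  simp [pathGraph_four_neighborFinset_zero, pathGraph_four_neighborFinset_two]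

lemma SV_layeredGraph_lt_of_fst_eq_zero (hk : 0 < k) (hv : v.1 = 0) :
    SV (layeredGraph k) v < 2 / k := by
  have hk : (0 : ℝ) < k := by exact_mod_cast hk
  rw [SV_layeredGraph_of_fst_eq_zero hv, div_lt_div_iff₀ (by positivity) hk]
  nlinarith

lemma SV_layeredGraph_lt_of_fst_eq_one (hk : 0 < k) (hv : v.1 = 1) :
    SV (layeredGraph k) v < 2 / k := by
  have hk : (0 : ℝ) < k := by exact_mod_cast hk
  have : (k : ℝ) ^ 2 / (k + k ^ 3) < 1 / k := by
    rw [div_lt_div_iff₀ (by positivity) hk]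
    nlinarith
  rw [SV_layeredGraph_of_fst_eq_one hv]
  linarith [show (2 : ℝ) / k = 1 / k + 1 / k by ring]

end LayeredGraph

/-- For every threshold τ > 0 there is a finite simple graph in which the set of vertices
with Shapley value exceeding τ is not dominating: there is a vertex a of positive degree
with SV(a) < τ and SV(b) < τ for all neighbors b of a. -/
theorem no_universal_sv_threshold (τ : ℝ) (hτ : 0 < τ) :
    ∃ (n : ℕ) (G : SimpleGraph (Fin n)) (a : Fin n),
      1 ≤ deg G a ∧ SV G a < τ ∧ (∀ b : Fin n, G.Adj a b → SV G b < τ) ∧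
      ¬ (∀ v : Fin n, SV G v > τ ∨ ∃ u : Fin n, SV G u > τ ∧ G.Adj v u) := by
  obtain ⟨k, hk⟩ := exists_nat_gt (2 / τ)
  have hk_pos : 0 < k := by exact_mod_cast (div_pos two_pos hτ).trans hk
  have h2k : 2 / (k : ℝ) < τ := (div_lt_comm₀ (by positivity) hτ).mpr hk
  obtain ⟨n, G, ⟨f⟩⟩ :
      ∃ n, ∃ G : SimpleGraph (Fin n), Nonempty (layeredGraph k ≃g G) :=
    ⟨_, _, ⟨Iso.map (Fintype.equivFin _) _⟩⟩
  let a : Σ i : Fin 4, Fin (k ^ (i : ℕ)) := ⟨0, 0, Nat.one_pos⟩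
  have ha : SV G (f a) < τ := by
    rw [f.SV_eq]
    exact (SV_layeredGraph_lt_of_fst_eq_zero hk_pos rfl).trans h2k
  have hnbr : ∀ b, G.Adj (f a) b → SV G b < τ := by
    intro b hb
    obtain ⟨b, rfl⟩ := f.surjective b
    rw [f.map_adj_iff, layeredGraph_adj_of_fst_eq_zero rfl] at hb
    rw [f.SV_eq]
    exact (SV_layeredGraph_lt_of_fst_eq_one hk_pos hb).trans h2k
  refine ⟨n, G, f a, ?_, ha, hnbr, fun hdom => ?_⟩
  · rw [f.deg_eq, deg_layeredGraph_of_fst_eq_zero rfl]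
    exact hk_pos
  · rcases hdom (f a) with h | ⟨u, hu, hadj⟩
    · exact h.not_gt ha
    · exact hu.not_gt (hnbr u hadj)
end

section
/- For every real number τ > 0, there exists a finite simple graph G with minimum degree at least 1 such that the set R_τ = {v ∈ V(G) : RND(v) > τ} is not a dominating set of G. -/
open Finset SimpleGraph

section Construction

variable (a b : ℕ)

/-- Pendant vertex 0 attached to vertex 1; vertices 1..a one side of a complete
bipartite graph with vertices a+1..a+b the other side. -/
def myG : SimpleGraph (Fin (a+b+1)) :=
  SimpleGraph.fromRel (fun x y => (x.val = 0 ∧ y.val = 1) ∨ (1 ≤ x.val ∧ x.val ≤ a ∧ a+1 ≤ y.val))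

lemma myG_adj (x y : Fin (a+b+1)) : (myG a b).Adj x y ↔ x ≠ y ∧
    (((x.val = 0 ∧ y.val = 1) ∨ (1 ≤ x.val ∧ x.val ≤ a ∧ a+1 ≤ y.val)) ∨
     ((y.val = 0 ∧ x.val = 1) ∨ (1 ≤ y.val ∧ y.val ≤ a ∧ a+1 ≤ x.val))) :=
  SimpleGraph.fromRel_adj _ x y

variable {a b}
variable (ha : 1 ≤ a) (hb : 1 ≤ b)

set_option linter.unusedSectionVars false

include ha hb

lemma nbr0 : ∀ (inst : Fintype ((myG a b).neighborSet ⟨0, by omega⟩)),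
    @SimpleGraph.neighborFinset _ (myG a b) ⟨0, by omega⟩ inst
      = {(⟨1, by omega⟩ : Fin (a+b+1))} := by
  intro inst
  ext y
  simp only [SimpleGraph.mem_neighborFinset, myG_adj, Finset.mem_singleton, Fin.ext_iff,
    Fin.val_mk]
  constructor
  · rintro ⟨hne, h⟩; omega
  · intro h
    refine ⟨fun hxy => ?_, Or.inl (Or.inl ⟨trivial, h⟩)⟩
    rw [Fin.ext_iff] at hxy
    simp only [Fin.val_mk] at hxy
    omega

lemma nbr1 : ∀ (inst : Fintype ((myG a b).neighborSet ⟨1, by omega⟩)),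
    @SimpleGraph.neighborFinset _ (myG a b) ⟨1, by omega⟩ inst
      = insert (⟨0, by omega⟩ : Fin (a+b+1)) (Finset.Ici (⟨a+1, by omega⟩ : Fin (a+b+1))) := by
  intro inst
  ext y
  simp only [SimpleGraph.mem_neighborFinset, myG_adj, Finset.mem_insert, Finset.mem_Ici,
    Fin.ext_iff, Fin.le_def, Fin.val_mk]
  constructor
  · rintro ⟨hne, h⟩; omega
  · intro h
    have hne : (1 : ℕ) ≠ y.val := by omega
    refine ⟨fun hxy => ?_, ?_⟩
    · rw [Fin.ext_iff] at hxy
      simp only [Fin.val_mk] at hxy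
      omega
    · rcases h with h | h
      · exact Or.inr (Or.inl ⟨h, trivial⟩)
      · exact Or.inl (Or.inr ⟨le_refl 1, ha, h⟩)

lemma nbrA (x : Fin (a+b+1)) (h1 : 2 ≤ x.val) (h2 : x.val ≤ a) :
    ∀ (inst : Fintype ((myG a b).neighborSet x)),
    @SimpleGraph.neighborFinset _ (myG a b) x inst
      = Finset.Ici (⟨a+1, by omega⟩ : Fin (a+b+1)) := by
  intro inst
  ext y
  simp only [SimpleGraph.mem_neighborFinset, myG_adj, Finset.mem_Ici, Fin.le_def, Fin.val_mk]
  constructor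
  · rintro ⟨hne, h⟩; omega
  · intro h
    refine ⟨fun hxy => ?_, Or.inl (Or.inr ⟨by omega, h2, h⟩)⟩
    rw [Fin.ext_iff] at hxy
    omega

lemma nbrB (x : Fin (a+b+1)) (hx : a+1 ≤ x.val) :
    ∀ (inst : Fintype ((myG a b).neighborSet x)),
    @SimpleGraph.neighborFinset _ (myG a b) x inst
      = Finset.Icc (⟨1, by omega⟩ : Fin (a+b+1)) (⟨a, by omega⟩ : Fin (a+b+1)) := by
  intro inst
  ext y
  simp only [SimpleGraph.mem_neighborFinset, myG_adj, Finset.mem_Icc, Fin.le_def, Fin.val_mk]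
  constructor
  · rintro ⟨hne, h⟩; omega
  · rintro ⟨hy1, hy2⟩
    refine ⟨fun hxy => ?_, Or.inr (Or.inr ⟨hy1, hy2, hx⟩)⟩
    rw [Fin.ext_iff] at hxy
    omega

lemma deg0 : ∀ (inst : Fintype ((myG a b).neighborSet ⟨0, by omega⟩)),
    @SimpleGraph.degree _ (myG a b) ⟨0, by omega⟩ inst = 1 := by
  intro inst
  rw [SimpleGraph.degree, nbr0 ha hb inst, Finset.card_singleton]

lemma card_Ici_ab : (Finset.Ici (⟨a+1, by omega⟩ : Fin (a+b+1))).card = b := by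
  rw [Fin.card_Ici]
  simp only [Fin.val_mk]
  omega

lemma card_Icc_ab : (Finset.Icc (⟨1, by omega⟩ : Fin (a+b+1)) (⟨a, by omega⟩ : Fin (a+b+1))).card
    = a := by
  rw [Fin.card_Icc]
  simp only [Fin.val_mk]
  omega

lemma zero_not_mem_Ici :
    (⟨0, by omega⟩ : Fin (a+b+1)) ∉ Finset.Ici (⟨a+1, by omega⟩ : Fin (a+b+1)) := by
  simp only [Finset.mem_Ici, Fin.le_def, Fin.val_mk]
  omega

lemma deg1 : ∀ (inst : Fintype ((myG a b).neighborSet ⟨1, by omega⟩)),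
    @SimpleGraph.degree _ (myG a b) ⟨1, by omega⟩ inst = b + 1 := by
  intro inst
  rw [SimpleGraph.degree, nbr1 ha hb inst,
    Finset.card_insert_of_notMem (zero_not_mem_Ici ha hb), card_Ici_ab ha hb]

lemma degA (x : Fin (a+b+1)) (h1 : 2 ≤ x.val) (h2 : x.val ≤ a) :
    ∀ (inst : Fintype ((myG a b).neighborSet x)),
    @SimpleGraph.degree _ (myG a b) x inst = b := by
  intro inst
  rw [SimpleGraph.degree, nbrA ha hb x h1 h2 inst, card_Ici_ab ha hb]

lemma degB (x : Fin (a+b+1)) (hx : a+1 ≤ x.val) :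
    ∀ (inst : Fintype ((myG a b).neighborSet x)),
    @SimpleGraph.degree _ (myG a b) x inst = a := by
  intro inst
  rw [SimpleGraph.degree, nbrB ha hb x hx inst, card_Icc_ab ha hb]

lemma deg_pos (v : Fin (a+b+1)) : 1 ≤ deg (myG a b) v := by
  unfold deg
  have hv := v.isLt
  by_cases h0 : v.val = 0
  · have : v = ⟨0, by omega⟩ := Fin.ext_iff.mpr h0
    rw [this, deg0 ha hb]
  · by_cases h1 : v.val = 1
    · have : v = ⟨1, by omega⟩ := Fin.ext_iff.mpr h1
      rw [this, deg1 ha hb]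
      omega
    · by_cases h2 : v.val ≤ a
      · rw [degA ha hb v (by omega) h2]
        omega
      · rw [degB ha hb v (by omega)]
        omega

lemma RND0 : RND (myG a b) ⟨0, by omega⟩ = 1 / ((b : ℝ) + 1) := by
  unfold RND
  rw [deg0 ha hb, nbr0 ha hb, Finset.sum_singleton, deg1 ha hb]
  push_cast
  norm_num

lemma RND1 : RND (myG a b) ⟨1, by omega⟩ = ((b : ℝ) + 1) ^ 2 / (1 + (b : ℝ) * (a : ℝ)) := by
  unfold RND
  rw [deg1 ha hb, nbr1 ha hb, Finset.sum_insert (zero_not_mem_Ici ha hb), deg0 ha hb]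
  rw [Finset.sum_eq_card_nsmul (fun u hu => by
        rw [Finset.mem_Ici, Fin.le_def] at hu
        rw [degB ha hb u hu]),
      card_Ici_ab ha hb, nsmul_eq_mul]
  push_cast
  ring_nf

lemma adj0_eq (u : Fin (a+b+1)) (h : (myG a b).Adj ⟨0, by omega⟩ u) :
    u = ⟨1, by omega⟩ := by
  rw [myG_adj] at h
  obtain ⟨-, h⟩ := h
  simp only [Fin.val_mk] at h
  rw [Fin.ext_iff]
  simp only [Fin.val_mk]
  omega

end Construction

/-- For every threshold τ > 0 there is a finite simple graph with minimum degree at least 1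
in which the set of vertices with RND value exceeding τ is not a dominating set. -/
theorem no_universal_rnd_threshold (τ : ℝ) (hτ : 0 < τ) :
    ∃ (n : ℕ) (G : SimpleGraph (Fin n)),
      0 < n ∧ (∀ v : Fin n, 1 ≤ deg G v) ∧
      ¬ (∀ v : Fin n, RND G v > τ ∨ ∃ u : Fin n, RND G u > τ ∧ G.Adj v u) := by
  set b : ℕ := ⌈1/τ⌉₊ with hbdef
  have hb : 1 ≤ b := Nat.one_le_iff_ne_zero.mpr (by
    simp only [hbdef, ne_eq, Nat.ceil_eq_zero, not_le]
    positivity)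
  set a : ℕ := ⌈((b : ℝ) + 1) ^ 2 / τ⌉₊ with hadef
  have ha : 1 ≤ a := Nat.one_le_iff_ne_zero.mpr (by
    simp only [hadef, ne_eq, Nat.ceil_eq_zero, not_le]
    positivity)
  have hb' : 1/τ ≤ (b : ℝ) := Nat.le_ceil _
  have ha' : ((b : ℝ) + 1) ^ 2 / τ ≤ (a : ℝ) := Nat.le_ceil _
  have hτb : τ * (1/τ) = 1 := by field_simp
  -- two key inequalities
  have key0 : 1 / ((b : ℝ) + 1) ≤ τ := by
    rw [div_le_iff₀ (by positivity)]
    nlinarith [mul_le_mul_of_nonneg_left hb' hτ.le]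
  have key1 : ((b : ℝ) + 1) ^ 2 / (1 + (b : ℝ) * (a : ℝ)) ≤ τ := by
    have hbR : (1 : ℝ) ≤ (b : ℝ) := by exact_mod_cast hb
    have haR : (0 : ℝ) ≤ (a : ℝ) := Nat.cast_nonneg a
    have h1 : τ * (((b : ℝ) + 1) ^ 2 / τ) ≤ τ * (a : ℝ) :=
      mul_le_mul_of_nonneg_left ha' hτ.le
    have h2 : τ * (((b : ℝ) + 1) ^ 2 / τ) = ((b : ℝ) + 1) ^ 2 := by field_simp
    rw [div_le_iff₀ (by positivity)]
    nlinarith [mul_le_mul_of_nonneg_left hbR (mul_nonneg hτ.le haR)]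
  refine ⟨a + b + 1, myG a b, by omega, deg_pos ha hb, fun H => ?_⟩
  rcases H ⟨0, by omega⟩ with h | ⟨u, hu, hadj⟩
  · rw [RND0 ha hb] at h
    linarith
  · rw [adj0_eq ha hb u hadj, RND1 ha hb] at hu
    linarith
end

section
/- There exist a finite simple graph G and real thresholds τ < σ < ρ such that, denoting by D(t) the dominating set output by the two-step algorithm on G with measure SV and threshold t, one has |D(τ)| < |D(σ)| and |D(ρ)| < |D(σ)|. That is, the size of the dominating set produced by the two-step algorithm with the Shapley value is not a function of the threshold with a unique local minimum. -/
/-- The dominating set output by the two-step algorithm with measure c and threshold t. -/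
noncomputable def twoStep {V : Type*} [Fintype V] (G : SimpleGraph V) (c : V → ℝ) (t : ℝ) :
    Set V :=
  {v : V | c v > t} ∪ {v : V | (insert v (G.neighborSet v)) ∩ {u : V | c u > t} = ∅}

/-!
In the graph below the Shapley values of the vertices `0`, `1`, `2` are `31/12`, `23/15` and `4/3`,
and all others are below `1`. At threshold `1` the set `X = {0, 1, 2}` already dominates the
graph, so `D = X`. At `3/2` the vertex `2` drops out of `X`; since its neighbour `3` is not in `X`,
both `2` and its pendant neighbour `4` become undominated and enter `Y`, so `|D|` grows from 3
to 4. At `2` the vertex `1` drops out as well, but its closed neighbourhood lies in that of `0`,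
so it leaves `D` without a replacement and `|D|` falls back to 3.
-/

namespace SimpleGraph

variable {V : Type*} [Fintype V] (G : SimpleGraph V) [DecidableRel G.Adj]

/-- The Shapley value computed in `ℚ`, so that it can be evaluated by `decide`. -/
def svRat (v : V) : ℚ := ∑ u ∈ G.neighborFinset v, (G.degree u : ℚ)⁻¹

theorem SV_eq_svRat (v : V) : SV G v = G.svRat v := by
  simp only [SV, svRat, Rat.cast_sum, Rat.cast_inv, Rat.cast_natCast, one_div]
  congr!

variable [DecidableEq V]

def twoStepFinset (X : Finset V) : Finset V :=
  X ∪ ({v | Disjoint (insert v (G.neighborFinset v)) X} : Finset V)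

theorem twoStep_eq_coe_twoStepFinset {c : V → ℝ} {t : ℝ} {X : Finset V}
    (hX : ∀ v, v ∈ X ↔ t < c v) : twoStep G c t = G.twoStepFinset X := by
  ext v
  simp [twoStep, twoStepFinset, hX, Set.eq_empty_iff_forall_notMem, Finset.disjoint_left]

theorem ncard_twoStep_SV (t : ℚ) :
    (twoStep G (SV G) t).ncard = (G.twoStepFinset {v | t < G.svRat v}).card := by
  rw [G.twoStep_eq_coe_twoStepFinset (X := {v | t < G.svRat v}) (fun v => by simp [SV_eq_svRat]),
    Set.ncard_coe_finset]

end SimpleGraph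

abbrev svCounterexample : SimpleGraph (Fin 8) := SimpleGraph.fromRel fun a b =>
  (a, b) ∈ [(0, 1), (0, 3), (0, 5), (0, 6), (0, 7), (1, 3), (1, 5), (1, 6), (2, 3), (2, 4)]

/-- The size of the dominating set produced by the two-step algorithm with the Shapley value
does not have a unique local minimum as a function of the threshold: there are thresholds
τ < σ < ρ with |D(τ)| < |D(σ)| and |D(ρ)| < |D(σ)|. -/
theorem two_step_sv_not_unique_local_min :
    ∃ (n : ℕ) (G : SimpleGraph (Fin n)) (τ σ ρ : ℝ),
      τ < σ ∧ σ < ρ ∧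
      (twoStep G (SV G) τ).ncard < (twoStep G (SV G) σ).ncard ∧
      (twoStep G (SV G) ρ).ncard < (twoStep G (SV G) σ).ncard := by
  refine ⟨8, svCounterexample, (1 : ℚ), (3 / 2 : ℚ), (2 : ℚ), by norm_num, by norm_num, ?_, ?_⟩ <;>
    simp only [svCounterexample.ncard_twoStep_SV] <;> decide +kernel
end

section
/- There exists a finite simple graph G such that, with threshold τ = 1, the dominating set output by the two-step algorithm on G using the measure SV is strictly smaller than the dominating set output by the two-step algorithm on G using the measure RND. -/
/-!
Vertex 1 lies between the leaf 0 and the degree-3 vertex 2, so `SV 1 = 1 + 1/3 > 1` while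
`RND 1 = 2² / (1 + 3) = 1`. With SV, vertex 1 joins the spine vertices 3, 4 above the threshold
and together they dominate the graph, so the output is `{1, 3, 4}`. With RND only 3 and 4 exceed
the threshold (`RND 2 = 9/10`), leaving 0 and 1 undominated: the output is `{0, 1, 3, 4}`.
-/

open Finset

theorem SimpleGraph.degree_le_sum_degree_neighborFinset {V : Type*} [Fintype V]
    (G : SimpleGraph V) [DecidableRel G.Adj] (v : V) :
    G.degree v ≤ ∑ u ∈ G.neighborFinset v, G.degree u := by
  rw [← card_neighborFinset_eq_degree, card_eq_sum_ones]
  refine sum_le_sum fun u hu => ?_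
  exact (G.degree_pos_iff_exists_adj u).mpr ⟨v, ((G.mem_neighborFinset v u).mp hu).symm⟩

section

variable {V : Type*} [Fintype V] (G : SimpleGraph V) [DecidableRel G.Adj]

theorem SV_eq_sum (v : V) : SV G v = ∑ u ∈ G.neighborFinset v, 1 / (G.degree u : ℝ) := by
  rw [SV]
  convert rfl

theorem one_lt_SV_iff (v : V) :
    1 < SV G v ↔ 1 < ∑ u ∈ G.neighborFinset v, 1 / (G.degree u : ℚ) := by
  rw [SV_eq_sum, ← Rat.cast_lt (K := ℝ)]
  push_cast
  rfl

theorem RND_eq_div (v : V) :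
    RND G v = (G.degree v : ℝ) ^ 2 / ∑ u ∈ G.neighborFinset v, (G.degree u : ℝ) := by
  rw [RND]
  convert rfl

theorem one_lt_RND_iff (v : V) :
    1 < RND G v ↔ ∑ u ∈ G.neighborFinset v, G.degree u < G.degree v ^ 2 := by
  rw [RND_eq_div]
  rcases (∑ u ∈ G.neighborFinset v, G.degree u).eq_zero_or_pos with hsum | hsum
  · have hv : G.degree v = 0 := by
      simpa [hsum] using G.degree_le_sum_degree_neighborFinset v
    simp [hv]
  · rw [one_lt_div (by exact_mod_cast hsum)]
    exact_mod_cast Iff.rfl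

theorem twoStep_eq_filter [DecidableEq V] {c : V → ℝ} {t : ℝ} (P : V → Prop) [DecidablePred P]
    (hP : ∀ v, t < c v ↔ P v) :
    twoStep G c t = ↑({v | P v ∨ ∀ u ∈ insert v (G.neighborFinset v), ¬ P u} : Finset V) := by
  ext v
  simp [twoStep, Set.eq_empty_iff_forall_notMem, hP]

end

/-- The triangular book with spine `3 – 4` and pages `2, 5, 6`, with the tail `2 – 1 – 0`. -/
def bookWithTail : SimpleGraph (Fin 7) :=
  .fromRel fun a b => (a, b) ∈ [(0, 1), (1, 2), (2, 3), (2, 4), (3, 4), (3, 5), (3, 6), (4, 5), (4, 6)]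

instance : DecidableRel bookWithTail.Adj :=
  inferInstanceAs (DecidableRel (SimpleGraph.fromRel _).Adj)

theorem twoStep_SV_bookWithTail :
    twoStep bookWithTail (SV bookWithTail) 1 = ↑({1, 3, 4} : Finset (Fin 7)) := by
  rw [twoStep_eq_filter _ _ (one_lt_SV_iff _), coe_inj]
  decide +kernel

theorem twoStep_RND_bookWithTail :
    twoStep bookWithTail (RND bookWithTail) 1 = ↑({0, 1, 3, 4} : Finset (Fin 7)) := by
  rw [twoStep_eq_filter _ _ (one_lt_RND_iff _), coe_inj]
  decide

/-- There is a graph on which, with threshold 1, the two-step algorithm with SV produces a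
strictly smaller dominating set than with RND. -/
theorem two_step_sv_lt_rnd_at_one :
    ∃ (n : ℕ) (G : SimpleGraph (Fin n)),
      (twoStep G (SV G) 1).ncard < (twoStep G (RND G) 1).ncard := by
  refine ⟨7, bookWithTail, ?_⟩
  rw [twoStep_SV_bookWithTail, twoStep_RND_bookWithTail, Set.ncard_coe_finset,
    Set.ncard_coe_finset]
  decide
end
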